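/- arXiv:1403.5180 — 2 statements merged into one kernel-verified Lean document; each statement's English description precedes it below -/
import Mathlib

section
/- Let (x0(s), u0(s)) on [t,T] with x0(t) = z be a feasible trajectory (satisfying dynamics, state/control constraints, and terminal constraint). Suppose there exist ε ∈ ℝ, a continuous function l on X × U, and v ∈ C^1([0,T] × X) such that: (i) l(x,u) + ∂v/∂s(s,x) + ∇_x v(s,x)·f(x,u) ≥ 0 on [t,T] × X × U; (ii) v(T,x) = 0 for x ∈ X_T; (iii) ∫_t^T [l(x0(s),u0(s)) + ∂v/∂s(s,x0(s)) + ∇_x v(s,x0(s))·f(x0(s),u0(s))] ds ≤ ε. Then (x0,u0) is ε-optimal for OCP(l,z): its cost ∫_t^T l(x0(s),u0(s)) ds exceeds the cost of any feasible trajectory from z by at most ε. -/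
/-!
Along any trajectory `(y, w)` the chain rule gives `d/ds v(s, y s) = L(l,v) - l`, so integrating from
`t` to `T` and using `v(T, ·) = 0` on `X_T`: the cost of a feasible competitor is at least `v(t, z)`
because `L(l,v) ≥ 0` along it, while the cost of `(x0, u0)` equals `v(t, z) + ∫ L(l,v) ≤ v(t, z) + ε`.
-/

open MeasureTheory

section

variable {E F : Type*} [NormedAddCommGroup E] [NormedSpace ℝ E]

theorem hasDerivAt_comp_graph {v : ℝ × E → ℝ} {y : ℝ → E} {y' : E} {s : ℝ}
    (hv : DifferentiableAt ℝ v (s, y s)) (hy : HasDerivAt y y' s) :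
    HasDerivAt (fun r => v (r, y r)) (fderiv ℝ v (s, y s) (1, y')) s :=
  hv.hasFDerivAt.comp_hasDerivAt s ((hasDerivAt_id s).prodMk hy)

/-- The operator `L(l, v) = l + ∂v/∂s + (∇ₓ v)ᵀ f`. -/
noncomputable def hjbOperator (f : E → F → E) (l : E → F → ℝ) (v : ℝ × E → ℝ)
    (s : ℝ) (x : E) (u : F) : ℝ :=
  l x u + fderiv ℝ v (s, x) (1, f x u)

variable {f : E → F → E} {l : E → F → ℝ} {v : ℝ × E → ℝ} {t T : ℝ} {y : ℝ → E} {w : ℝ → F}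

theorem sub_le_integral_of_hjbOperator_nonneg (hv : Differentiable ℝ v) (hT : t ≤ T)
    (hdyn : ∀ s ∈ Set.Icc t T, HasDerivAt y (f (y s) (w s)) s)
    (hpos : ∀ s ∈ Set.Ioo t T, 0 ≤ hjbOperator f l v s (y s) (w s))
    (hint : IntervalIntegrable (fun s => l (y s) (w s)) volume t T) :
    v (t, y t) - v (T, y T) ≤ ∫ s in t..T, l (y s) (w s) := by
  have hderiv : ∀ s ∈ Set.Icc t T,
      HasDerivAt (fun r => v (r, y r)) (fderiv ℝ v (s, y s) (1, f (y s) (w s))) s :=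
    fun s hs => hasDerivAt_comp_graph (hv _) (hdyn s hs)
  have key : ∫ s in t..T, -l (y s) (w s) ≤ v (T, y T) - v (t, y t) :=
    intervalIntegral.integral_le_sub_of_hasDeriv_right_of_le hT
      (fun s hs => (hderiv s hs).continuousAt.continuousWithinAt)
      (fun s hs => (hderiv s (Set.Ioo_subset_Icc_self hs)).hasDerivWithinAt)
      ((intervalIntegrable_iff_integrableOn_Icc_of_le hT).1 hint.neg)
      (fun s hs => neg_le_iff_add_nonneg'.2 (hpos s hs))
  rw [intervalIntegral.integral_neg] at key
  linarith

theorem integral_hjbOperator_eq (hv : Differentiable ℝ v) (hT : t ≤ T)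
    (hdyn : ∀ s ∈ Set.Icc t T, HasDerivAt y (f (y s) (w s)) s)
    (hint : IntervalIntegrable (fun s => l (y s) (w s)) volume t T)
    (hLint : IntervalIntegrable (fun s => hjbOperator f l v s (y s) (w s)) volume t T) :
    ∫ s in t..T, hjbOperator f l v s (y s) (w s)
      = (∫ s in t..T, l (y s) (w s)) + (v (T, y T) - v (t, y t)) := by
  have hDint : IntervalIntegrable (fun s => fderiv ℝ v (s, y s) (1, f (y s) (w s))) volume t T := by
    simpa [hjbOperator] using hLint.sub hint
  have hFTC : ∫ s in t..T, fderiv ℝ v (s, y s) (1, f (y s) (w s)) = v (T, y T) - v (t, y t) :=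
    intervalIntegral.integral_eq_sub_of_hasDerivAt
      (fun s hs => hasDerivAt_comp_graph (hv _) (hdyn s (Set.uIcc_of_le hT ▸ hs))) hDint
  rw [← hFTC]
  exact intervalIntegral.integral_add hint hDint

end

theorem hjb_eps_optimality_general
    {dX dU : ℕ}
    (X : Set (EuclideanSpace ℝ (Fin dX))) (U : Set (EuclideanSpace ℝ (Fin dU)))
    (XT : Set (EuclideanSpace ℝ (Fin dX)))
    (f : EuclideanSpace ℝ (Fin dX) → EuclideanSpace ℝ (Fin dU) → EuclideanSpace ℝ (Fin dX))
    (l : EuclideanSpace ℝ (Fin dX) → EuclideanSpace ℝ (Fin dU) → ℝ)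
    (t T : ℝ) (hT : t ≤ T) (z : EuclideanSpace ℝ (Fin dX))
    (ε : ℝ)
    -- the given feasible trajectory
    (x0 : ℝ → EuclideanSpace ℝ (Fin dX)) (u0 : ℝ → EuclideanSpace ℝ (Fin dU))
    (hx0dyn : ∀ s ∈ Set.Icc t T, HasDerivAt x0 (f (x0 s) (u0 s)) s)
    (hx0init : x0 t = z) (hx0final : x0 T ∈ XT)
    (hx0int : IntervalIntegrable (fun s => l (x0 s) (u0 s)) MeasureTheory.volume t T)
    -- the C¹ value function candidate and the relaxed HJB conditions
    (v : ℝ × EuclideanSpace ℝ (Fin dX) → ℝ)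
    (hv : ContDiff ℝ 1 v)
    (hHJBpos : ∀ s ∈ Set.Icc t T, ∀ x ∈ X, ∀ u ∈ U,
      l x u + fderiv ℝ v (s, x) (1, f x u) ≥ 0)
    (hterm : ∀ x ∈ XT, v (T, x) = 0)
    (hfitint : IntervalIntegrable
      (fun s => l (x0 s) (u0 s) + fderiv ℝ v (s, x0 s) (1, f (x0 s) (u0 s)))
      MeasureTheory.volume t T)
    (hfit : (∫ s in t..T, (l (x0 s) (u0 s) + fderiv ℝ v (s, x0 s) (1, f (x0 s) (u0 s)))) ≤ ε)
    -- any feasible competing trajectory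
    (x : ℝ → EuclideanSpace ℝ (Fin dX)) (u : ℝ → EuclideanSpace ℝ (Fin dU))
    (hxdyn : ∀ s ∈ Set.Icc t T, HasDerivAt x (f (x s) (u s)) s)
    (hxX : ∀ s ∈ Set.Icc t T, x s ∈ X)
    (huU : ∀ s ∈ Set.Icc t T, u s ∈ U)
    (hxinit : x t = z) (hxfinal : x T ∈ XT)
    (hxint : IntervalIntegrable (fun s => l (x s) (u s)) MeasureTheory.volume t T) :
    (∫ s in t..T, l (x0 s) (u0 s)) ≤ (∫ s in t..T, l (x s) (u s)) + ε := by
  have hv' : Differentiable ℝ v := hv.differentiable one_ne_zero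
  have hcompetitor := sub_le_integral_of_hjbOperator_nonneg hv' hT hxdyn
    (fun s hs => hHJBpos s (Set.Ioo_subset_Icc_self hs) _ (hxX s (Set.Ioo_subset_Icc_self hs)) _
      (huU s (Set.Ioo_subset_Icc_self hs))) hxint
  have hcandidate := integral_hjbOperator_eq hv' hT hx0dyn hx0int hfitint
  rw [hxinit, hterm _ hxfinal] at hcompetitor
  rw [hx0init, hterm _ hx0final] at hcandidate
  unfold hjbOperator at hcandidate
  linarith

/-- Proposition 2 (ε-optimality from the relaxed HJB conditions): if `(l, v, ε)` satisfies
the relaxed HJB positivity, terminal and ε-fit conditions along a feasible trajectory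
`(x0, u0)`, then `(x0, u0)` is ε-optimal for OCP(l, z). -/
theorem hjb_eps_optimality
    {dX dU : ℕ}
    (X : Set (EuclideanSpace ℝ (Fin dX))) (U : Set (EuclideanSpace ℝ (Fin dU)))
    (XT : Set (EuclideanSpace ℝ (Fin dX)))
    (hXcpt : IsCompact X) (hUcpt : IsCompact U) (hXT : XT ⊆ X)
    (f : EuclideanSpace ℝ (Fin dX) → EuclideanSpace ℝ (Fin dU) → EuclideanSpace ℝ (Fin dX))
    (hf : ContDiff ℝ 1 (fun p : EuclideanSpace ℝ (Fin dX) × EuclideanSpace ℝ (Fin dU) => f p.1 p.2))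
    (l : EuclideanSpace ℝ (Fin dX) → EuclideanSpace ℝ (Fin dU) → ℝ)
    (hl : Continuous (fun p : EuclideanSpace ℝ (Fin dX) × EuclideanSpace ℝ (Fin dU) => l p.1 p.2))
    (t T : ℝ) (hT : t ≤ T) (z : EuclideanSpace ℝ (Fin dX))
    (ε : ℝ)
    -- the given feasible trajectory
    (x0 : ℝ → EuclideanSpace ℝ (Fin dX)) (u0 : ℝ → EuclideanSpace ℝ (Fin dU))
    (hx0dyn : ∀ s ∈ Set.Icc t T, HasDerivAt x0 (f (x0 s) (u0 s)) s)
    (hx0X : ∀ s ∈ Set.Icc t T, x0 s ∈ X)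
    (hu0U : ∀ s ∈ Set.Icc t T, u0 s ∈ U)
    (hx0init : x0 t = z) (hx0final : x0 T ∈ XT)
    (hx0int : IntervalIntegrable (fun s => l (x0 s) (u0 s)) MeasureTheory.volume t T)
    -- the C¹ value function candidate and the relaxed HJB conditions
    (v : ℝ × EuclideanSpace ℝ (Fin dX) → ℝ)
    (hv : ContDiff ℝ 1 v)
    (hHJBpos : ∀ s ∈ Set.Icc t T, ∀ x ∈ X, ∀ u ∈ U,
      l x u + fderiv ℝ v (s, x) (1, f x u) ≥ 0)
    (hterm : ∀ x ∈ XT, v (T, x) = 0)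
    (hfitint : IntervalIntegrable
      (fun s => l (x0 s) (u0 s) + fderiv ℝ v (s, x0 s) (1, f (x0 s) (u0 s)))
      MeasureTheory.volume t T)
    (hfit : (∫ s in t..T, (l (x0 s) (u0 s) + fderiv ℝ v (s, x0 s) (1, f (x0 s) (u0 s)))) ≤ ε)
    -- any feasible competing trajectory
    (x : ℝ → EuclideanSpace ℝ (Fin dX)) (u : ℝ → EuclideanSpace ℝ (Fin dU))
    (hxdyn : ∀ s ∈ Set.Icc t T, HasDerivAt x (f (x s) (u s)) s)
    (hxX : ∀ s ∈ Set.Icc t T, x s ∈ X)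
    (huU : ∀ s ∈ Set.Icc t T, u s ∈ U)
    (hxinit : x t = z) (hxfinal : x T ∈ XT)
    (hxint : IntervalIntegrable (fun s => l (x s) (u s)) MeasureTheory.volume t T) :
    (∫ s in t..T, l (x0 s) (u0 s)) ≤ (∫ s in t..T, l (x s) (u s)) + ε :=
  hjb_eps_optimality_general X U XT f l t T hT z ε x0 u0 hx0dyn hx0init hx0final hx0int v hv hHJBpos
    hterm hfitint hfit x u hxdyn hxX huU hxinit hxfinal hxint
end

section
/- For the two-dimensional 'minimum exit norm' problem with X = U = B₂, X_T = ∂B₂, dynamics f(x,u) = u, and Lagrangian l0(x,u) = ‖x‖₂² + ‖u‖₂²: for every feasible trajectory from z (ẋ(s) = u(s), x(s) ∈ B₂, u(s) ∈ B₂, x(t) = z, ‖x(T)‖₂ = 1), the cost ∫_t^T (‖x(s)‖₂² + ‖u(s)‖₂²) ds is at least 1 - ‖z‖₂², and the trajectory following the feedback law u = x (i.e., x(s) = z e^{s-t} until exiting the ball) achieves this bound. Hence the optimal value function is v0(z) = 1 - ‖z‖₂². -/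
/-!
Since `‖x‖² + ‖u‖² - 2⟪x, u⟫ = ‖x - u‖² ≥ 0` and `2⟪x, ẋ⟫` is the derivative of `‖x‖²`, the
cost of any trajectory dominates the drop `v(x(t)) - v(x(T)) = 1 - ‖z‖²` of `v = 1 - ‖·‖²`
along it. Equality holds exactly when `u = x`, that is along
`x(s) = e^{s-t} z`, which leaves the unit ball at time `t - log ‖z‖`.
-/

open Real Set intervalIntegral RealInnerProductSpace

section InnerProductSpace

variable {E : Type*} [NormedAddCommGroup E] [InnerProductSpace ℝ E]

theorem two_mul_inner_le_norm_sq_add_norm_sq (x u : E) : 2 * ⟪x, u⟫ ≤ ‖x‖ ^ 2 + ‖u‖ ^ 2 := by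
  nlinarith [norm_sub_sq_real x u, sq_nonneg ‖x - u‖]

theorem norm_sq_sub_le_integral_norm_sq_add_norm_sq {x u : ℝ → E} {a b : ℝ} (hab : a ≤ b)
    (hx : ∀ s ∈ Icc a b, HasDerivAt x (u s) s)
    (hint : IntervalIntegrable (fun s => ‖x s‖ ^ 2 + ‖u s‖ ^ 2) MeasureTheory.volume a b) :
    ‖x b‖ ^ 2 - ‖x a‖ ^ 2 ≤ ∫ s in a..b, (‖x s‖ ^ 2 + ‖u s‖ ^ 2) :=
  sub_le_integral_of_hasDeriv_right_of_le hab
    (HasDerivAt.continuousOn fun s hs => (hx s hs).norm_sq)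
    (fun s hs => (hx s (Ioo_subset_Icc_self hs)).norm_sq.hasDerivWithinAt)
    ((intervalIntegrable_iff_integrableOn_Icc_of_le hab).1 hint)
    (fun s _ => two_mul_inner_le_norm_sq_add_norm_sq (x s) (u s))

theorem integral_norm_sq_add_norm_sq_of_hasDerivAt_self {x : ℝ → E}
    (hx : ∀ s, HasDerivAt x (x s) s) (a b : ℝ) :
    ∫ s in a..b, (‖x s‖ ^ 2 + ‖x s‖ ^ 2) = ‖x b‖ ^ 2 - ‖x a‖ ^ 2 := by
  have hcont : Continuous x := continuous_iff_continuousAt.2 fun s => (hx s).continuousAt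
  refine integral_eq_sub_of_hasDerivAt (fun s _ => (hx s).norm_sq.congr_deriv ?_)
    ((by fun_prop : Continuous fun s => ‖x s‖ ^ 2 + ‖x s‖ ^ 2).intervalIntegrable a b)
  rw [real_inner_self_eq_norm_sq]
  ring

end InnerProductSpace

section NormedSpace

variable {E : Type*} [NormedAddCommGroup E] [NormedSpace ℝ E]

theorem hasDerivAt_exp_sub_smul (t : ℝ) (z : E) (s : ℝ) :
    HasDerivAt (fun r => exp (r - t) • z) (exp (s - t) • z) s := by
  simpa using ((hasDerivAt_sub_const_iff t).2 (hasDerivAt_id s)).exp.smul_const z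

theorem norm_exp_smul_of_ne_zero {z : E} (hz : z ≠ 0) (r : ℝ) :
    ‖exp r • z‖ = exp (r + log ‖z‖) := by
  rw [norm_smul, norm_of_nonneg (exp_pos r).le, exp_add, exp_log (norm_pos_iff.2 hz)]

end NormedSpace

/-- 2D minimum exit norm problem (benchmark V-B.3): every feasible trajectory exiting
the unit ball from `z` has cost `∫ (‖x‖² + ‖u‖²) ds ≥ 1 - ‖z‖²`, and for `z ≠ 0` the
feedback trajectory `u = x` (i.e. `x(s) = e^{s-t} z`) achieves the bound. Hence the
optimal value function is `v0(z) = 1 - ‖z‖²`. -/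
theorem two_dim_min_exit_norm
    (t : ℝ) (z : EuclideanSpace ℝ (Fin 2)) (hz : ‖z‖ ≤ 1) :
    (∀ (T : ℝ) (x : ℝ → EuclideanSpace ℝ (Fin 2)) (u : ℝ → EuclideanSpace ℝ (Fin 2)),
      t ≤ T →
      (∀ s ∈ Set.Icc t T, HasDerivAt x (u s) s) →
      (∀ s ∈ Set.Icc t T, ‖u s‖ ≤ 1) →
      (∀ s ∈ Set.Icc t T, ‖x s‖ ≤ 1) →
      x t = z → ‖x T‖ = 1 →
      IntervalIntegrable (fun s => ‖x s‖ ^ 2 + ‖u s‖ ^ 2) MeasureTheory.volume t T →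
      (∫ s in t..T, (‖x s‖ ^ 2 + ‖u s‖ ^ 2)) ≥ 1 - ‖z‖ ^ 2) ∧
    (z ≠ 0 →
      ∃ (T : ℝ) (x : ℝ → EuclideanSpace ℝ (Fin 2)) (u : ℝ → EuclideanSpace ℝ (Fin 2)),
        t ≤ T ∧
        (∀ s ∈ Set.Icc t T, HasDerivAt x (u s) s) ∧
        (∀ s ∈ Set.Icc t T, ‖u s‖ ≤ 1) ∧
        (∀ s ∈ Set.Icc t T, ‖x s‖ ≤ 1) ∧
        x t = z ∧ ‖x T‖ = 1 ∧
        (∀ s, u s = x s) ∧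
        (∀ s, x s = Real.exp (s - t) • z) ∧
        (∫ s in t..T, (‖x s‖ ^ 2 + ‖u s‖ ^ 2)) = 1 - ‖z‖ ^ 2) := by
  refine ⟨fun T x u htT hx _ _ hxt hxT hint => ?_, fun hz0 => ?_⟩
  · have := norm_sq_sub_le_integral_norm_sq_add_norm_sq htT hx hint
    rwa [hxt, hxT, one_pow] at this
  set x : ℝ → EuclideanSpace ℝ (Fin 2) := fun s => exp (s - t) • z
  have hnorm (s : ℝ) : ‖x s‖ = exp (s - t + log ‖z‖) := norm_exp_smul_of_ne_zero hz0 _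
  have hlog : log ‖z‖ ≤ 0 := log_nonpos (norm_nonneg z) hz
  have hexit : ‖x (t - log ‖z‖)‖ = 1 := by rw [hnorm]; simp
  have hball : ∀ s ∈ Icc t (t - log ‖z‖), ‖x s‖ ≤ 1 := fun s hs => by
    rw [hnorm, exp_le_one_iff]
    linarith [hs.2]
  refine ⟨t - log ‖z‖, x, x, by linarith, fun s _ => hasDerivAt_exp_sub_smul t z s, hball,
    hball, by simp [x], hexit, fun _ => rfl, fun _ => rfl, ?_⟩
  rw [integral_norm_sq_add_norm_sq_of_hasDerivAt_self (hasDerivAt_exp_sub_smul t z), hexit]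
  simp
end
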